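/- For λ < 0 and δ > 0 sufficiently small, suppose b: (0,δ] → ℝ satisfies b(s) = 1/(λs) + O(1) as s → 0, and set ρ(t) = exp(∫ₜ^δ b(s) ds) and s(t) = ∫₀^t ρ(r) dr. Then ∫₀^δ ρ(t) dt < ∞, ∫₀^δ (1 + |b(t)|/2)/ρ(t) dt = ∞, and ∫₀^δ (1 + |b(t)|/2)·s(t)/ρ(t) dt < ∞. -/

import Mathlib

/-!
Put `α = -1/λ > 0`. Integrating `b = 1/(λ s) + O(1)` from `t` to `δ` gives
`ρ t = (t/δ)^α · e^{O(δ)}`, so `ρ` is bounded on `(0, δ]`. Since `1 + |b t|/2` is comparable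
to `1/t`, the second integrand dominates a multiple of `1/t` and diverges, while
`s t ≤ t · sup_{(0,t]} ρ ≲ t (t/δ)^α` cancels both the `1/t` and the `(t/δ)^α` in the third
integrand, which is therefore bounded.
-/

open MeasureTheory Set Real

theorem ContinuousOn.integrableOn_Ioc_of_norm_le {E : Type*} [NormedAddCommGroup E]
    {f : ℝ → E} {a b M : ℝ} (hf : ContinuousOn f (Ioc a b)) (hM : ∀ t ∈ Ioc a b, ‖f t‖ ≤ M) :
    IntegrableOn f (Ioc a b) :=
  .of_bound measure_Ioc_lt_top (hf.aestronglyMeasurable measurableSet_Ioc) M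
    (ae_restrict_of_forall_mem measurableSet_Ioc hM)

theorem lintegral_Ioc_ofReal_eq_top_of_inv_le {f : ℝ → ℝ} {c δ : ℝ} (hc : 0 < c) (hδ : 0 < δ)
    (hf : ∀ t ∈ Ioc 0 δ, c * t⁻¹ ≤ f t) :
    ∫⁻ t in Ioc 0 δ, ENNReal.ofReal (f t) = ⊤ := by
  have h_inv : ∫⁻ t in Ioc 0 δ, ENNReal.ofReal t⁻¹ = ⊤ := by
    by_contra h
    change _ ≠ ⊤ at h
    rw [lintegral_ofReal_ne_top_iff_integrable measurable_inv.aestronglyMeasurable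
      (ae_restrict_of_forall_mem measurableSet_Ioc fun t ht => inv_nonneg.2 ht.1.le),
      ← IntegrableOn, ← intervalIntegrable_iff_integrableOn_Ioc_of_le hδ.le] at h
    simp [intervalIntegrable_inv_iff, hδ.ne] at h
  refine eq_top_iff.2 (le_trans ?_ (setLIntegral_mono' measurableSet_Ioc
    fun t ht => ENNReal.ofReal_le_ofReal (hf t ht)))
  simp_rw [ENNReal.ofReal_mul hc.le]
  rw [lintegral_const_mul _ measurable_inv.ennreal_ofReal, h_inv, ENNReal.mul_top
    (ENNReal.ofReal_pos.2 hc).ne']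

theorem integral_one_div_mul_self {lam t δ : ℝ} (ht : 0 < t) (hδ : 0 < δ) :
    ∫ s in t..δ, 1 / (lam * s) = lam⁻¹ * log (δ / t) := by
  simp_rw [one_div, mul_inv]
  rw [intervalIntegral.integral_const_mul, integral_inv_of_pos ht hδ]

theorem abs_integral_sub_log_le {lam t δ C : ℝ} {b : ℝ → ℝ} (ht : 0 < t) (htδ : t ≤ δ)
    (hb : IntervalIntegrable b volume t δ) (hC : ∀ s ∈ Ioc t δ, |b s - 1 / (lam * s)| ≤ C) :
    |(∫ s in t..δ, b s) - lam⁻¹ * log (δ / t)| ≤ C * (δ - t) := by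
  have h_int : IntervalIntegrable (fun s => 1 / (lam * s)) volume t δ := by
    simp_rw [one_div, mul_inv]
    refine (intervalIntegral.intervalIntegrable_inv (fun s hs => ?_)
      continuousOn_id).const_mul _
    rw [uIcc_of_le htδ] at hs
    exact (ht.trans_le hs.1).ne'
  rw [← integral_one_div_mul_self ht (ht.trans_le htδ), ← intervalIntegral.integral_sub hb h_int]
  have h := intervalIntegral.norm_integral_le_of_norm_le_const (C := C)
    (f := fun s => b s - 1 / (lam * s)) (by rwa [uIoc_of_le htδ])
  rwa [abs_of_nonneg (sub_nonneg.2 htδ)] at h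

-- The paper's `ρ` and `s`.
noncomputable def scaleDensity (b : ℝ → ℝ) (δ t : ℝ) : ℝ := exp (∫ s in t..δ, b s)

noncomputable def scaleFunction (b : ℝ → ℝ) (δ t : ℝ) : ℝ := ∫ r in Ioc 0 t, scaleDensity b δ r

section

variable {lam δ C : ℝ} {b : ℝ → ℝ}

theorem scaleDensity_pos (t : ℝ) : 0 < scaleDensity b δ t := exp_pos _

theorem scaleFunction_nonneg (t : ℝ) : 0 ≤ scaleFunction b δ t :=
  setIntegral_nonneg measurableSet_Ioc fun r _ => (scaleDensity_pos r).le

theorem continuousOn_scaleDensity {a : ℝ} (hb : ContinuousOn b (Ioc a δ)) :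
    ContinuousOn (scaleDensity b δ) (Ioc a δ) := by
  intro t ht
  have ha : (a + t) / 2 < t := by linarith [ht.1]
  have h_sub : Icc ((a + t) / 2) δ ⊆ Ioc a δ := fun s hs => ⟨by linarith [hs.1, ht.1], hs.2⟩
  have h_cont : ContinuousOn (scaleDensity b δ) (Icc ((a + t) / 2) δ) := by
    have h_int := (hb.mono h_sub).integrableOn_Icc (μ := volume)
    rw [← uIcc_of_le (ha.le.trans ht.2)] at h_int ⊢
    exact continuous_exp.comp_continuousOn
      (intervalIntegral.continuousOn_primitive_interval_left h_int)
  exact (h_cont t ⟨ha.le, ht.2⟩).mono_of_mem_nhdsWithin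
    (mem_nhdsWithin.2 ⟨Ioi ((a + t) / 2), isOpen_Ioi, ha, fun s hs => ⟨hs.1.le, hs.2.2⟩⟩)

theorem scaleDensity_mem_Icc (hb : ContinuousOn b (Ioc 0 δ))
    (hC : ∀ s, 0 < s → s ≤ δ → |b s - 1 / (lam * s)| ≤ C) {t : ℝ} (ht : t ∈ Ioc 0 δ) :
    scaleDensity b δ t ∈
      Icc (exp (-(C * δ)) * (t / δ) ^ (-lam⁻¹)) (exp (C * δ) * (t / δ) ^ (-lam⁻¹)) := by
  obtain ⟨ht0, htδ⟩ := ht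
  have hδ : 0 < δ := ht0.trans_le htδ
  have hC0 : 0 ≤ C := (abs_nonneg _).trans (hC t ht0 htδ)
  set E := (∫ s in t..δ, b s) - lam⁻¹ * log (δ / t)
  have h_err : |E| ≤ C * δ :=
    (abs_integral_sub_log_le ht0 htδ
      ((hb.mono fun s hs => ⟨ht0.trans_le hs.1, hs.2⟩).intervalIntegrable_of_Icc htδ)
      fun s hs => hC s (ht0.trans hs.1) hs.2).trans (by nlinarith)
  have h_pow : (t / δ) ^ (-lam⁻¹) = exp (lam⁻¹ * log (δ / t)) := by
    rw [rpow_def_of_pos (div_pos ht0 hδ), ← inv_div, log_inv]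
    ring_nf
  have h_split : scaleDensity b δ t = (t / δ) ^ (-lam⁻¹) * exp E := by
    rw [h_pow, ← exp_add, add_sub_cancel]
    rfl
  obtain ⟨h_lo, h_hi⟩ := abs_le.1 h_err
  rw [h_split, mul_comm (exp _), mul_comm (exp _)]
  exact ⟨by gcongr, by gcongr⟩

theorem scaleDensity_le_exp (hlam : lam < 0) (hb : ContinuousOn b (Ioc 0 δ))
    (hC : ∀ s, 0 < s → s ≤ δ → |b s - 1 / (lam * s)| ≤ C) {t : ℝ} (ht : t ∈ Ioc 0 δ) :
    scaleDensity b δ t ≤ exp (C * δ) := by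
  have h_pow : (t / δ) ^ (-lam⁻¹) ≤ 1 :=
    rpow_le_one (div_nonneg ht.1.le (ht.1.trans_le ht.2).le)
      (div_le_one_of_le₀ ht.2 (ht.1.trans_le ht.2).le) (by simp [hlam.le])
  calc scaleDensity b δ t ≤ exp (C * δ) * (t / δ) ^ (-lam⁻¹) := (scaleDensity_mem_Icc hb hC ht).2
    _ ≤ exp (C * δ) := mul_le_of_le_one_right (exp_pos _).le h_pow

theorem integrableOn_scaleDensity (hlam : lam < 0) (hb : ContinuousOn b (Ioc 0 δ))
    (hC : ∀ s, 0 < s → s ≤ δ → |b s - 1 / (lam * s)| ≤ C) :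
    IntegrableOn (scaleDensity b δ) (Ioc 0 δ) :=
  (continuousOn_scaleDensity hb).integrableOn_Ioc_of_norm_le fun t ht => by
    rw [norm_of_nonneg (scaleDensity_pos t).le]
    exact scaleDensity_le_exp hlam hb hC ht

theorem scaleFunction_le (hlam : lam < 0) (hb : ContinuousOn b (Ioc 0 δ))
    (hC : ∀ s, 0 < s → s ≤ δ → |b s - 1 / (lam * s)| ≤ C) {t : ℝ} (ht : t ∈ Ioc 0 δ) :
    scaleFunction b δ t ≤ exp (C * δ) * (t / δ) ^ (-lam⁻¹) * t := by
  have hα : 0 ≤ -lam⁻¹ := by simp [hlam.le]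
  have hδ : 0 < δ := ht.1.trans_le ht.2
  have h_bound : ∀ r ∈ Ioc 0 t, ‖scaleDensity b δ r‖ ≤ exp (C * δ) * (t / δ) ^ (-lam⁻¹) := by
    rintro r ⟨hr0, hrt⟩
    rw [norm_of_nonneg (scaleDensity_pos r).le]
    refine (scaleDensity_mem_Icc hb hC ⟨hr0, hrt.trans ht.2⟩).2.trans ?_
    gcongr
  have h_int := norm_setIntegral_le_of_norm_le_const (μ := volume) measure_Ioc_lt_top h_bound
  rw [Real.volume_real_Ioc_of_le ht.1.le, sub_zero] at h_int
  exact (Real.le_norm_self _).trans h_int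

theorem abs_abs_mul_sub_abs_inv_le {y t : ℝ} (ht : 0 < t) (h : |y - 1 / (lam * t)| ≤ C) :
    |(|y| * t - |lam|⁻¹)| ≤ C * t := by
  have h_mul : (y - 1 / (lam * t)) * t = y * t - lam⁻¹ := by
    rw [sub_mul, one_div, mul_inv, inv_mul_cancel_right₀ ht.ne']
  calc |(|y| * t - |lam|⁻¹)| = |(|y * t| - |lam⁻¹|)| := by rw [abs_mul, abs_inv, abs_of_pos ht]
    _ ≤ |y * t - lam⁻¹| := abs_abs_sub_abs_le_abs_sub _ _
    _ = |y - 1 / (lam * t)| * t := by rw [← h_mul, abs_mul, abs_of_pos ht]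
    _ ≤ C * t := by gcongr

theorem lintegral_one_add_abs_div_two_div_scaleDensity_eq_top (hlam : lam < 0) (hδ : 0 < δ)
    (hb : ContinuousOn b (Ioc 0 δ)) (hC : ∀ s, 0 < s → s ≤ δ → |b s - 1 / (lam * s)| ≤ C) :
    ∫⁻ t in Ioc 0 δ, ENNReal.ofReal ((1 + |b t| / 2) / scaleDensity b δ t) = ⊤ := by
  have hC0 : 0 ≤ C := (abs_nonneg _).trans (hC δ hδ le_rfl)
  have hlam' : 0 < |lam|⁻¹ := by simp [hlam.ne]
  refine lintegral_Ioc_ofReal_eq_top_of_inv_le (c := |lam|⁻¹ / ((2 + C) * exp (C * δ)))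
    (by positivity) hδ fun t ht => ?_
  obtain ⟨h_lo, -⟩ := abs_le.1 (abs_abs_mul_sub_abs_inv_le ht.1 (hC t ht.1 ht.2))
  have h_b : |lam|⁻¹ ≤ (2 + C) * (1 + |b t| / 2) * t := by
    nlinarith [mul_nonneg (mul_nonneg hC0 (abs_nonneg (b t))) ht.1.le, ht.1]
  calc |lam|⁻¹ / ((2 + C) * exp (C * δ)) * t⁻¹ = |lam|⁻¹ / t / (2 + C) / exp (C * δ) := by
        field_simp
    _ ≤ (1 + |b t| / 2) / exp (C * δ) := by
        gcongr
        rw [div_le_iff₀ (by positivity), div_le_iff₀ ht.1]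
        linarith
    _ ≤ (1 + |b t| / 2) / scaleDensity b δ t := by
        gcongr
        exacts [exp_pos _, scaleDensity_le_exp hlam hb hC ht]

theorem integrableOn_one_add_abs_div_two_mul_scaleFunction_div_scaleDensity (hlam : lam < 0)
    (hb : ContinuousOn b (Ioc 0 δ)) (hC : ∀ s, 0 < s → s ≤ δ → |b s - 1 / (lam * s)| ≤ C) :
    IntegrableOn (fun t => (1 + |b t| / 2) * scaleFunction b δ t / scaleDensity b δ t)
      (Ioc 0 δ) := by
  have h_cont : ContinuousOn (scaleFunction b δ) (Ioc 0 δ) :=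
    (intervalIntegral.continuousOn_primitive ((integrableOn_Icc_iff_integrableOn_Ioc).2
      (integrableOn_scaleDensity hlam hb hC))).mono Ioc_subset_Icc_self
  refine (((continuousOn_const.add (hb.abs.div_const 2)).mul h_cont).div
    (continuousOn_scaleDensity hb) fun t _ => (scaleDensity_pos t).ne').integrableOn_Ioc_of_norm_le
    (M := ((1 + C / 2) * δ + |lam|⁻¹ / 2) * exp (C * δ) ^ 2) fun t ht => ?_
  obtain ⟨ht0, htδ⟩ := ht
  have hC0 : 0 ≤ C := (abs_nonneg _).trans (hC t ht0 htδ)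
  obtain ⟨-, h_hi⟩ := abs_le.1 (abs_abs_mul_sub_abs_inv_le ht0 (hC t ht0 htδ))
  have h_b : (1 + |b t| / 2) * t ≤ (1 + C / 2) * δ + |lam|⁻¹ / 2 := by
    nlinarith [mul_le_mul_of_nonneg_left htδ hC0]
  have h_sc := scaleFunction_le hlam hb hC ⟨ht0, htδ⟩
  have h_ρ := (scaleDensity_mem_Icc hb hC ⟨ht0, htδ⟩).1
  set φ := (t / δ) ^ (-lam⁻¹)
  have hφ : 0 < φ := rpow_pos_of_pos (div_pos ht0 (ht0.trans_le htδ)) _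
  rw [norm_of_nonneg (div_nonneg (mul_nonneg (by positivity) (scaleFunction_nonneg t))
    (scaleDensity_pos t).le)]
  calc (1 + |b t| / 2) * scaleFunction b δ t / scaleDensity b δ t
      ≤ (1 + |b t| / 2) * (exp (C * δ) * φ * t) / (exp (-(C * δ)) * φ) := by gcongr
    _ = (1 + |b t| / 2) * t * exp (C * δ) ^ 2 := by
        rw [exp_neg]
        field_simp
    _ ≤ ((1 + C / 2) * δ + |lam|⁻¹ / 2) * exp (C * δ) ^ 2 := by gcongr

end

open MeasureTheory in
theorem negative_eigenvalue_separatrix (lam δ C : ℝ) (hlam : lam < 0)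
    (hδ : 0 < δ) (b : ℝ → ℝ) (hb : ContinuousOn b (Set.Ioc 0 δ))
    (hC : ∀ s, 0 < s → s ≤ δ → |b s - 1 / (lam * s)| ≤ C) :
    let ρ : ℝ → ℝ := fun t => Real.exp (∫ s in t..δ, b s)
    let sc : ℝ → ℝ := fun t => ∫ r in Set.Ioc 0 t, ρ r
    IntegrableOn ρ (Set.Ioc 0 δ) ∧
    (∫⁻ t in Set.Ioc 0 δ, ENNReal.ofReal ((1 + |b t| / 2) / ρ t)) = ⊤ ∧
    IntegrableOn (fun t => (1 + |b t| / 2) * sc t / ρ t) (Set.Ioc 0 δ) :=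
  ⟨integrableOn_scaleDensity hlam hb hC,
    lintegral_one_add_abs_div_two_div_scaleDensity_eq_top hlam hδ hb hC,
    integrableOn_one_add_abs_div_two_mul_scaleFunction_div_scaleDensity hlam hb hC⟩
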